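/- arXiv:1907.10350 — 2 statements merged into one kernel-verified Lean document; each statement's English description precedes it below -/
import Mathlib

section
/- Let R₁ and R₂ be finite rings with |Z(R₁)| = |Z(R₂)|, and let (φ, ψ) be an isoclinism between R₁ and R₂. Then for every r in the additive commutator subgroup [R₁, R₁], the r-noncommuting graph Γ_{R₁}^r is isomorphic (as a simple graph) to the ψ(r)-noncommuting graph Γ_{R₂}^{ψ(r)}. -/
/-- The `r`-noncommuting graph of a finite ring `R`: vertices are elements of `R`,
and distinct `x`, `y` are adjacent iff `x*y - y*x ≠ r` and `x*y - y*x ≠ -r`. -/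
def ncGraph {R : Type*} [NonUnitalRing R] (r : R) : SimpleGraph R where
  Adj x y := x ≠ y ∧ x * y - y * x ≠ r ∧ x * y - y * x ≠ -r
  symm := by
    refine ⟨?_⟩
    rintro x y ⟨h1, h2, h3⟩
    refine ⟨h1.symm, fun h => h3 ?_, fun h => h2 ?_⟩
    · rw [← neg_sub (y * x) (x * y), h]
    · rw [← neg_sub (y * x) (x * y), h, neg_neg]
  loopless := ⟨fun x h => h.1 rfl⟩


/-- The center of R as an additive subgroup. -/
def centerAdd (R : Type*) [NonUnitalRing R] : AddSubgroup R where
  carrier := {z | ∀ x, z * x = x * z}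
  zero_mem' := fun x => by rw [zero_mul, mul_zero]
  add_mem' := fun {a b} ha hb x => by rw [add_mul, mul_add, ha x, hb x]
  neg_mem' := fun {a} ha x => by rw [neg_mul, mul_neg, ha x]

/-- The additive subgroup [R, R] generated by all additive commutators. -/
def commSub (R : Type*) [NonUnitalRing R] : AddSubgroup R :=
  AddSubgroup.closure {z | ∃ x y : R, z = x * y - y * x}

theorem comm_mem {R : Type*} [NonUnitalRing R] (u v : R) :
    u * v - v * u ∈ commSub R :=
  AddSubgroup.subset_closure ⟨u, v, rfl⟩

/-!
An additive group is in bijection with (quotient) × (subgroup), so equal center sizes let us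
extend `φ` to a bijection `e : R₁ ≃ R₂` lying over `φ`. The isoclinism condition then says
`e x * e y - e y * e x = ψ (x * y - y * x)`, and as `ψ` is an injective additive map,
`e` carries `r`-noncommutativity exactly to `ψ r`-noncommutativity.
-/

theorem ncGraph_adj {R : Type*} [NonUnitalRing R] (r x y : R) :
    (ncGraph r).Adj x y ↔ x ≠ y ∧ x * y - y * x ≠ r ∧ x * y - y * x ≠ -r :=
  Iff.rfl

section AddGroup

variable {G H : Type*} [AddGroup G] [AddGroup H] {S : AddSubgroup G} {T : AddSubgroup H}

noncomputable def liftQuotientEquiv (φ : G ⧸ S ≃ H ⧸ T) (θ : S ≃ T) : G ≃ H :=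
  AddSubgroup.addGroupEquivQuotientProdAddSubgroup.trans
    ((φ.prodCongr θ).trans AddSubgroup.addGroupEquivQuotientProdAddSubgroup.symm)

theorem mk_liftQuotientEquiv (φ : G ⧸ S ≃ H ⧸ T) (θ : S ≃ T) (x : G) :
    (QuotientAddGroup.mk (liftQuotientEquiv φ θ x) : H ⧸ T) = φ (QuotientAddGroup.mk x) := by
  let eH : H ≃ (H ⧸ T) × T := AddSubgroup.addGroupEquivQuotientProdAddSubgroup
  exact congrArg Prod.fst (eH.apply_symm_apply (φ (QuotientAddGroup.mk x), θ _))

theorem coe_addEquiv_eq_coe_iff {A : AddSubgroup G} {B : AddSubgroup H} (ψ : A ≃+ B) (c s : A) :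
    (ψ c : H) = ψ s ↔ (c : G) = s := by
  rw [Subtype.coe_inj, Subtype.coe_inj, ψ.injective.eq_iff]

end AddGroup

section NcGraphIso

variable {R₁ R₂ : Type*} [NonUnitalRing R₁] [NonUnitalRing R₂]

def ncGraphIsoOfCommutator (ψ : commSub R₁ ≃+ commSub R₂) (e : R₁ ≃ R₂)
    (he : ∀ x y, e x * e y - e y * e x = ψ ⟨x * y - y * x, comm_mem x y⟩) (r : commSub R₁) :
    ncGraph (r : R₁) ≃g ncGraph (ψ r : R₂) where
  toEquiv := e
  map_rel_iff' {x y} := by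
    simp only [ncGraph_adj, ne_eq, e.apply_eq_iff_eq, he]
    rw [← NegMemClass.coe_neg, ← map_neg, coe_addEquiv_eq_coe_iff, coe_addEquiv_eq_coe_iff]
    rfl

end NcGraphIso

/-- if (φ, ψ) is an isoclinism between finite rings R₁, R₂ with
|Z(R₁)| = |Z(R₂)|, then Γ_{R₁}^r ≅ Γ_{R₂}^{ψ(r)} for every r ∈ [R₁, R₁]. -/
theorem stmt10 {R₁ R₂ : Type*} [NonUnitalRing R₁] [NonUnitalRing R₂]
    [Fintype R₁] [Fintype R₂]
    (hZ : Nat.card (centerAdd R₁) = Nat.card (centerAdd R₂))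
    (φ : (R₁ ⧸ centerAdd R₁) ≃+ (R₂ ⧸ centerAdd R₂))
    (ψ : commSub R₁ ≃+ commSub R₂)
    (hcompat : ∀ (u v : R₁) (u' v' : R₂),
      φ (QuotientAddGroup.mk u) = QuotientAddGroup.mk u' →
      φ (QuotientAddGroup.mk v) = QuotientAddGroup.mk v' →
      (ψ ⟨u * v - v * u, comm_mem u v⟩ : R₂) = u' * v' - v' * u')
    (r : commSub R₁) :
    Nonempty (ncGraph (r : R₁) ≃g ncGraph ((ψ r : R₂))) := by
  obtain ⟨θ⟩ := Finite.card_eq.mp hZ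
  let e := liftQuotientEquiv φ.toEquiv θ
  have he : ∀ x y, e x * e y - e y * e x = ψ ⟨x * y - y * x, comm_mem x y⟩ := fun x y =>
    (hcompat x y (e x) (e y) (mk_liftQuotientEquiv _ θ x).symm
      (mk_liftQuotientEquiv _ θ y).symm).symm
  exact ⟨ncGraphIsoOfCommutator ψ e he r⟩
end

section
/- Let R be a finite noncommutative ring with |R| ≠ 8 and let r ∈ K(R). Then the graph Δ_R^r is not a tree. -/
/-- The center of R as a set. -/
def centerSet (R : Type*) [NonUnitalRing R] : Set R := {z | ∀ x, z * x = x * z}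

/-- The induced subgraph of the r-noncommuting graph on the non-central elements. -/
def deltaGraph {R : Type*} [NonUnitalRing R] (r : R) :
    SimpleGraph {x : R // x ∉ centerSet R} :=
  (ncGraph r).comap Subtype.val

namespace SimpleGraph

variable {V : Type*} {G : SimpleGraph V}

theorem IsAcyclic.not_adj_of_adj_of_adj (hG : G.IsAcyclic) {x y z : V} (hxy : G.Adj x y)
    (hyz : G.Adj y z) : ¬ G.Adj x z := by
  classical
  intro hxz
  exact hG.cliqueFree le_rfl {x, y, z} (is3Clique_triple_iff.2 ⟨hxy, hxz, hyz⟩)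

theorem Reachable.apply_eq_of_forall_adj {β : Sort*} {f : V → β}
    (hf : ∀ v w, G.Adj v w → f v = f w) {u v : V} (h : G.Reachable u v) : f u = f v := by
  obtain ⟨p⟩ := h
  induction p with
  | nil => rfl
  | cons h _ ih => exact (hf _ _ h).trans ih

end SimpleGraph

section DeltaGraph

variable {R : Type*} [NonUnitalRing R] {r : R}

theorem zero_mem_centerSet : (0 : R) ∈ centerSet R := fun x => by rw [zero_mul, mul_zero]

theorem deltaGraph_adj {x y : {t : R // t ∉ centerSet R}} :
    (deltaGraph r).Adj x y ↔
      (x : R) ≠ y ∧ (x : R) * y - y * x ≠ r ∧ (x : R) * y - y * x ≠ -r :=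
  Iff.rfl

theorem deltaGraph_adj_of_commute (hr : r ≠ 0) {x y : {t : R // t ∉ centerSet R}}
    (hne : (x : R) ≠ y) (hxy : (x : R) * y = y * x) : (deltaGraph r).Adj x y := by
  rw [deltaGraph_adj, sub_eq_zero_of_eq hxy]
  exact ⟨hne, hr.symm, by rwa [ne_comm, neg_ne_zero]⟩

theorem commutator_eq_or_eq_neg_of_isTree (ht : (deltaGraph r).IsTree) {a b : R}
    (hab : a * b ≠ b * a) : a * b - b * a = r ∨ a * b - b * a = -r := by
  by_contra! h
  have hcb : b * (a + b) - (a + b) * b = -(a * b - b * a) := by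
    simp only [mul_add, add_mul]; abel
  have hca : a * (a + b) - (a + b) * a = a * b - b * a := by
    simp only [mul_add, add_mul]; abel
  have ha : a ∉ centerSet R := fun h => hab (h b)
  have hb : b ∉ centerSet R := fun h => hab (h a).symm
  have hc : a + b ∉ centerSet R := fun h =>
    hab (sub_eq_zero.mp (hca ▸ sub_eq_zero.mpr (h a).symm))
  have hne : a ≠ b := fun h => hab (h ▸ rfl)
  have ha0 : a ≠ 0 := fun h => ha (h ▸ zero_mem_centerSet)
  have hb0 : b ≠ 0 := fun h => hb (h ▸ zero_mem_centerSet)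
  refine ht.isAcyclic.not_adj_of_adj_of_adj
    (x := ⟨a, ha⟩) (y := ⟨b, hb⟩) (z := ⟨a + b, hc⟩) ⟨hne, h⟩ ?_ ⟨?_, ?_⟩
  · refine ⟨fun h => ha0 (right_eq_add.mp h), ?_⟩
    rw [hcb]
    exact ⟨fun e => h.2 (neg_eq_iff_eq_neg.mp e), fun e => h.1 (neg_inj.mp e)⟩
  · exact fun h => hb0 (left_eq_add.mp h)
  · simpa only [hca] using h

theorem commute_of_deltaGraph_adj (ht : (deltaGraph r).IsTree)
    {x y : {t : R // t ∉ centerSet R}} (hxy : (deltaGraph r).Adj x y) : (x : R) * y = y * x := by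
  by_contra h
  rcases commutator_eq_or_eq_neg_of_isTree ht h with e | e
  · exact hxy.2.1 e
  · exact hxy.2.2 e

theorem add_mem_centerSet_of_deltaGraph_adj (ht : (deltaGraph r).IsTree) (hr : r ≠ 0)
    {x y : {t : R // t ∉ centerSet R}} (hxy : (deltaGraph r).Adj x y) :
    (x : R) + y ∈ centerSet R := by
  have hc := commute_of_deltaGraph_adj ht hxy
  have hx0 : (x : R) ≠ 0 := fun h => x.2 (h ▸ zero_mem_centerSet)
  have hy0 : (y : R) ≠ 0 := fun h => y.2 (h ▸ zero_mem_centerSet)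
  by_contra hs
  refine ht.isAcyclic.not_adj_of_adj_of_adj hxy (z := ⟨x + y, hs⟩)
    (deltaGraph_adj_of_commute hr (fun h => hx0 (right_eq_add.mp h)) ?_)
    (deltaGraph_adj_of_commute hr (fun h => hy0 (left_eq_add.mp h)) ?_)
  · simp only [mul_add, add_mul, hc]
  · simp only [mul_add, add_mul, hc]

theorem centralizer_eq_of_deltaGraph_adj (ht : (deltaGraph r).IsTree) (hr : r ≠ 0)
    {x y : {t : R // t ∉ centerSet R}} (hxy : (deltaGraph r).Adj x y) :
    Set.centralizer {(x : R)} = Set.centralizer {(y : R)} := by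
  ext u
  have hu := add_mem_centerSet_of_deltaGraph_adj ht hr hxy u
  rw [add_mul, mul_add] at hu
  simp only [Set.mem_centralizer_iff, Set.mem_singleton_iff, forall_eq]
  constructor <;> intro h
  · rw [h] at hu
    exact add_left_cancel hu
  · rw [h] at hu
    exact add_right_cancel hu

end DeltaGraph

theorem stmt16_general {R : Type*} [NonUnitalRing R]
    (hnc : ∃ a b : R, a * b ≠ b * a)
    (r : R) :
    ¬ (deltaGraph r).IsTree := by
  intro ht
  obtain ⟨a, b, hab⟩ := hnc
  have hr : r ≠ 0 := by
    rintro rfl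
    simpa [sub_eq_zero, hab] using commutator_eq_or_eq_neg_of_isTree ht hab
  have ha : a ∉ centerSet R := fun h => hab (h b)
  have hb : b ∉ centerSet R := fun h => hab (h a).symm
  have hcent : Set.centralizer {a} = Set.centralizer {b} :=
    (ht.connected.preconnected ⟨a, ha⟩ ⟨b, hb⟩).apply_eq_of_forall_adj
      (f := fun v : {t : R // t ∉ centerSet R} => Set.centralizer {(v : R)})
      fun _ _ => centralizer_eq_of_deltaGraph_adj ht hr
  have hba : b ∈ Set.centralizer {a} := hcent ▸ Set.mem_centralizer_iff.mpr (by simp)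
  exact hab (Set.mem_centralizer_iff.mp hba a rfl)

/-- if R is noncommutative with |R| ≠ 8 and r ∈ K(R), then Δ_R^r
is not a tree. -/
theorem stmt16 {R : Type*} [NonUnitalRing R] [Fintype R]
    (hnc : ∃ a b : R, a * b ≠ b * a) (hcard : Nat.card R ≠ 8)
    (r : R) (hr : ∃ a b : R, a * b - b * a = r) :
    ¬ (deltaGraph r).IsTree :=
  stmt16_general hnc r
end
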